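/- For A₁,…,Aₙ ∈ ℳⁿ, one has D(A₁,…,Aₙ) > 0 if and only if there exist linearly independent vectors v₁,…,vₙ ∈ ℝⁿ with v_i ∈ P(A_i) for i = 1,…,n. -/

import Mathlib

/-!
Write each `Aᵢ = Σₖ uᵢₖ uᵢₖᵀ` (from `Aᵢ = BᵢᵀBᵢ`), so that `P(Aᵢ) = span {uᵢₖ}ₖ`.
The mixed discriminant is multilinear and `n! · D(u₁u₁ᵀ, …, uₙuₙᵀ) = det [u₁ … uₙ]²`, hence
`n! · D(A₁, …, Aₙ) = Σ_k det [u₁ₖ₍₁₎ … uₙₖ₍ₙ₎]²`: it is positive iff some selection `uᵢₖ₍ᵢ₎`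
is linearly independent. Conversely, if independent `vᵢ ∈ span {uᵢₖ}ₖ` are given, expanding
`det [v₁ … vₙ]` multilinearly shows that one of the `det [u₁ₖ₍₁₎ … uₙₖ₍ₙ₎]` is nonzero.
-/

/-- The mixed discriminant of `n` real `n × n` matrices:
`D(A₁,…,Aₙ) = (1/n!) Σ_{σ ∈ S(n)} det(M_σ)`, where the `j`-th column of `M_σ`
is the `j`-th column of `A_{σ(j)}`. -/
noncomputable def mixedDisc (n : ℕ) (A : Fin n → Matrix (Fin n) (Fin n) ℝ) : ℝ :=
  ((n.factorial : ℝ))⁻¹ *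
    ∑ σ : Equiv.Perm (Fin n), (Matrix.of fun i j => A (σ j) i j).det

open Matrix Finset Submodule
open scoped Nat MatrixOrder

namespace Matrix

section Determinant

variable {n κ R : Type*} [Fintype n] [DecidableEq n] [Fintype κ] [CommRing R]

theorem det_of_sum (g : n → κ → n → R) :
    (of fun i => ∑ k, g i k).det = ∑ f : n → κ, (of fun i => g i (f i)).det := by
  classical
  exact (detRowAlternating : (n → R) [⋀^n]→ₗ[R] R).map_sum g

theorem det_of_sum_smul (c : n → κ → R) (g : n → κ → n → R) :
    (of fun i => ∑ k, c i k • g i k).det =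
      ∑ f : n → κ, (∏ i, c i (f i)) * (of fun i => g i (f i)).det := by
  rw [det_of_sum]
  exact sum_congr rfl fun f _ => det_mul_column (fun i => c i (f i)) (of fun i => g i (f i))

theorem linearIndependent_iff_det_ne_zero [IsDomain R] (v : n → n → R) :
    LinearIndependent R v ↔ (of v).det ≠ 0 :=
  linearIndependent_row_iff.trans nonsingular_iff_det_ne_zero

end Determinant

theorem range_mulVecLin_mul_transpose_self {m n R : Type*} [Fintype m] [Fintype n]
    [Field R] [LinearOrder R] [IsStrictOrderedRing R] (B : Matrix m n R) :
    LinearMap.range (B * Bᵀ).mulVecLin = LinearMap.range B.mulVecLin := by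
  refine eq_of_le_of_finrank_eq ?_ (rank_self_mul_transpose B)
  rw [mulVecLin_mul]
  exact LinearMap.range_comp_le_range _ _

theorem transpose_mul_self_eq_sum_vecMulVec {m n R : Type*} [Fintype m] [CommSemiring R]
    (B : Matrix m n R) : Bᵀ * B = ∑ k, vecMulVec (B k) (B k) := by
  ext a b
  simp [mul_apply, vecMulVec_apply, sum_apply]

theorem PosSemidef.exists_eq_sum_vecMulVec_self {n : Type*} [Fintype n] [DecidableEq n]
    {A : Matrix n n ℝ} (hA : A.PosSemidef) :
    ∃ u : n → n → ℝ, A = ∑ k, vecMulVec (u k) (u k) ∧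
      LinearMap.range (toLin' A) = span ℝ (Set.range u) := by
  obtain ⟨B, rfl⟩ := CStarAlgebra.nonneg_iff_eq_star_mul_self.mp hA.nonneg
  have hB : star B = Bᵀ := conjTranspose_eq_transpose_of_trivial B
  refine ⟨B, by rw [hB, transpose_mul_self_eq_sum_vecMulVec], ?_⟩
  have hrange := range_mulVecLin_mul_transpose_self Bᵀ
  rw [transpose_transpose] at hrange
  rw [toLin'_apply', hB, hrange, range_mulVecLin, col_transpose]
  rfl

end Matrix

theorem exists_linearIndependent_of_forall_mem_span {ι κ K : Type*} [Fintype ι] [DecidableEq ι]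
    [Fintype κ] [Field K] {u : ι → κ → ι → K} {v : ι → ι → K} (hv : LinearIndependent K v)
    (hmem : ∀ i, v i ∈ span K (Set.range (u i))) :
    ∃ k : ι → κ, LinearIndependent K fun i => u i (k i) := by
  choose c hc using fun i => (mem_span_range_iff_exists_fun K).mp (hmem i)
  obtain rfl : v = fun i => ∑ k, c i k • u i k := funext fun i => (hc i).symm
  have hdet := (linearIndependent_iff_det_ne_zero _).mp hv
  rw [det_of_sum_smul] at hdet
  obtain ⟨k, -, hk⟩ := exists_ne_zero_of_sum_ne_zero hdet
  exact ⟨k, (linearIndependent_iff_det_ne_zero _).mpr (right_ne_zero_of_mul hk)⟩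

section MixedDiscriminant

variable {n : ℕ}

theorem mixedDisc_eq_sum_det_transpose (A : Fin n → Matrix (Fin n) (Fin n) ℝ) :
    mixedDisc n A = (n ! : ℝ)⁻¹ * ∑ σ : Equiv.Perm (Fin n), (of fun j i => A (σ j) i j).det := by
  rw [mixedDisc]
  congr 1
  refine sum_congr rfl fun σ _ => ?_
  rw [← det_transpose]
  rfl

theorem mixedDisc_sum {κ : Type*} [Fintype κ] (C : Fin n → κ → Matrix (Fin n) (Fin n) ℝ) :
    mixedDisc n (fun i => ∑ k, C i k) = ∑ k : Fin n → κ, mixedDisc n fun i => C i (k i) := by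
  simp only [mixedDisc_eq_sum_det_transpose, ← mul_sum]
  rw [sum_comm]
  congr 1
  refine sum_congr rfl fun σ _ => ?_
  have hrow : (of fun j i => (∑ k, C (σ j) k) i j) =
      of fun j => ∑ k, fun i => C (σ j) k i j := by
    simp only [Matrix.sum_apply, Finset.sum_fn]
  rw [hrow, det_of_sum]
  exact Fintype.sum_equiv (σ.arrowCongr (Equiv.refl κ)) _ _ fun f => by simp [Equiv.arrowCongr]

theorem mixedDisc_vecMulVec (u w : Fin n → Fin n → ℝ) :
    mixedDisc n (fun i => vecMulVec (u i) (w i)) = (n ! : ℝ)⁻¹ * ((of u).det * (of w).det) := by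
  rw [mixedDisc_eq_sum_det_transpose]
  congr 1
  have hσ : ∀ σ : Equiv.Perm (Fin n), (of fun j i => vecMulVec (u (σ j)) (w (σ j)) i j).det =
      Equiv.Perm.sign σ * (∏ j, w (σ j) j) * (of u).det := by
    intro σ
    have hrows : (of fun j i => vecMulVec (u (σ j)) (w (σ j)) i j) =
        of fun j a => w (σ j) j * (of u).submatrix σ id j a := by
      ext j a
      simp [vecMulVec_apply, mul_comm]
    rw [hrows, det_mul_column, det_permute]
    ring
  simp only [hσ, ← sum_mul, det_apply' (of w)]
  simp [mul_comm]

theorem mixedDisc_sum_vecMulVec_self {κ : Type*} [Fintype κ] (u : Fin n → κ → Fin n → ℝ) :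
    mixedDisc n (fun i => ∑ k, vecMulVec (u i k) (u i k)) =
      (n ! : ℝ)⁻¹ * ∑ k : Fin n → κ, (of fun i => u i (k i)).det ^ 2 := by
  simp only [mixedDisc_sum, mixedDisc_vecMulVec, ← mul_sum, sq]

theorem mixedDisc_sum_vecMulVec_self_pos_iff {κ : Type*} [Fintype κ]
    (u : Fin n → κ → Fin n → ℝ) :
    0 < mixedDisc n (fun i => ∑ k, vecMulVec (u i k) (u i k)) ↔
      ∃ k : Fin n → κ, LinearIndependent ℝ fun i => u i (k i) := by
  rw [mixedDisc_sum_vecMulVec_self, mul_pos_iff_of_pos_left (by positivity),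
    sum_pos_iff_of_nonneg fun k _ => sq_nonneg _]
  simp only [mem_univ, true_and, sq_pos_iff, linearIndependent_iff_det_ne_zero]

end MixedDiscriminant

theorem mixedDisc_pos_iff_linearIndependent {n : ℕ}
    (A : Fin n → Matrix (Fin n) (Fin n) ℝ) (hA : ∀ i, (A i).PosSemidef) :
    0 < mixedDisc n A ↔
      ∃ v : Fin n → (Fin n → ℝ), LinearIndependent ℝ v ∧
        ∀ i, v i ∈ LinearMap.range (Matrix.toLin' (A i)) := by
  choose u hAu hrange using fun i => (hA i).exists_eq_sum_vecMulVec_self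
  simp only [hrange]
  rw [show A = _ from funext hAu, mixedDisc_sum_vecMulVec_self_pos_iff]
  constructor
  · rintro ⟨k, hk⟩
    exact ⟨_, hk, fun i => subset_span ⟨k i, rfl⟩⟩
  · rintro ⟨v, hv, hmem⟩
    exact exists_linearIndependent_of_forall_mem_span hv hmem
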